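/- Let m > 0 and let u, v : ℝ → ℝ be continuously differentiable on [0,1] with u(x) ≥ 0 and v(x) ≥ 0 for all x ∈ [0,1]. Suppose that for every x ∈ [0,1] the pair satisfies the steady-state system (m + 2v(x))(m + v(x))·u′(x) + 2u(x)(2m + v(x))·v′(x) = 0 and 2v(x)(2m + u(x))·u′(x) + (m + 2u(x))(m + u(x))·v′(x) = 0. Then u and v are constant on [0,1]. In particular, for positive scent decay no non-constant (territorial) steady-state patterns can form in the local-interaction model. -/

import Mathlib

/-!
Both rows of the system are exact after multiplication by an integrating factor: the first
integrals `u (m + 2v)³ / (m + v)²` and `v (m + 2u)³ / (m + u)²` are constant on `[0, 1]`.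
Eliminating `v` between the two resulting polynomial relations leaves a nonzero polynomial
equation for `u` alone, so the continuous function `u` takes only finitely many values on the
interval and is therefore constant; by symmetry so is `v`.
-/

open Polynomial

/-- A first integral of the row `(m + 2b)(m + b) a' + 2a(2m + b) b' = 0`. -/
noncomputable def firstIntegral (m a b : ℝ) : ℝ := a * (m + 2 * b) ^ 3 / (m + b) ^ 2

theorem firstIntegral_nonneg {m a b : ℝ} (hm : 0 ≤ m) (ha : 0 ≤ a) (hb : 0 ≤ b) :
    0 ≤ firstIntegral m a b := by
  unfold firstIntegral
  positivity

theorem firstIntegral_eq_iff {m a b c : ℝ} (hb : m + b ≠ 0) :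
    firstIntegral m a b = c ↔ a * (m + 2 * b) ^ 3 = c * (m + b) ^ 2 :=
  div_eq_iff (pow_ne_zero 2 hb)

/-- The derivative of `firstIntegral m (f y) (g y)` is the row times `(m + 2g)² / (m + g)³`. -/
theorem hasDerivWithinAt_firstIntegral {f g : ℝ → ℝ} {f' g' m x : ℝ} {s : Set ℝ}
    (hf : HasDerivWithinAt f f' s x) (hg : HasDerivWithinAt g g' s x) (hgx : m + g x ≠ 0)
    (hrow : (m + 2 * g x) * (m + g x) * f' + 2 * f x * (2 * m + g x) * g' = 0) :
    HasDerivWithinAt (fun y => firstIntegral m (f y) (g y)) 0 s x := by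
  have hquot := (hf.mul (((hg.const_mul 2).const_add m).pow 3)).div
    ((hg.const_add m).pow 2) (pow_ne_zero 2 hgx)
  refine hquot.congr_deriv ?_
  simp only [Pi.mul_apply, Pi.pow_apply]
  field_simp
  linear_combination (m + g x) * (m + 2 * g x) ^ 2 * hrow

theorem Convex.eq_of_hasDerivWithinAt_zero {s : Set ℝ} {f : ℝ → ℝ} (hs : Convex ℝ s)
    (hf : ∀ x ∈ s, HasDerivWithinAt f 0 s x) {x y : ℝ} (hx : x ∈ s) (hy : y ∈ s) :
    f x = f y := by
  have h := hs.norm_image_sub_le_of_norm_hasDerivWithin_le hf (fun _ _ => norm_zero.le) hx hy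
  rw [zero_mul, norm_le_zero_iff, sub_eq_zero] at h
  exact h.symm

theorem IsPreconnected.eq_of_isRoot {α 𝕜 : Type*} [TopologicalSpace α] [NormedField 𝕜]
    {s : Set α} {f : α → 𝕜} {p : 𝕜[X]} (hs : IsPreconnected s) (hf : ContinuousOn f s)
    (hp : p ≠ 0) (hroot : ∀ z ∈ s, p.IsRoot (f z)) {x y : α} (hx : x ∈ s) (hy : y ∈ s) :
    f x = f y :=
  (finite_setOfPred_isRoot hp).countable.isTotallyDisconnected (f '' s)
    (Set.image_subset_iff.2 hroot) (hs.image f hf) (Set.mem_image_of_mem f hx)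
    (Set.mem_image_of_mem f hy)

section Eliminant

variable {R : Type*} [CommRing R]

/-- Substituting `b = c₂ (m + a)² / (m + 2a)³` from `b (m + 2a)³ = c₂ (m + a)²` into
`a (m + 2b)³ = c₁ (m + b)²` and clearing denominators
gives `eval a (eliminant m c₁ c₂) = 0`. -/
noncomputable def eliminant (m c₁ c₂ : R) : R[X] :=
  X * (C m * (C m + 2 * X) ^ 3 + 2 * (C c₂ * (C m + X) ^ 2)) ^ 3
    - C c₁ * (C m + 2 * X) ^ 3 * (C m * (C m + 2 * X) ^ 3 + C c₂ * (C m + X) ^ 2) ^ 2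

theorem eval_eliminant (m c₁ c₂ t : R) :
    (eliminant m c₁ c₂).eval t =
      t * (m * (m + 2 * t) ^ 3 + 2 * (c₂ * (m + t) ^ 2)) ^ 3
        - c₁ * (m + 2 * t) ^ 3 * (m * (m + 2 * t) ^ 3 + c₂ * (m + t) ^ 2) ^ 2 := by
  simp [eliminant]

theorem isRoot_eliminant {m c₁ c₂ a b : R} (h₁ : a * (m + 2 * b) ^ 3 = c₁ * (m + b) ^ 2)
    (h₂ : b * (m + 2 * a) ^ 3 = c₂ * (m + a) ^ 2) : (eliminant m c₁ c₂).IsRoot a := by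
  rw [IsRoot.def, eval_eliminant, ← h₂]
  linear_combination ((m + 2 * a) ^ 3) ^ 3 * h₁

theorem eliminant_ne_zero [IsDomain R] {m c₁ c₂ : R} (hm : m ≠ 0)
    (hc₁ : m ^ 2 + c₁ ≠ 0) :
    eliminant m c₁ c₂ ≠ 0 := by
  intro h
  have h_eval : (eliminant m c₁ c₂).eval (-m) = m ^ 11 * (m ^ 2 + c₁) := by
    rw [eval_eliminant]
    ring
  rw [h, eval_zero] at h_eval
  exact mul_ne_zero (pow_ne_zero 11 hm) hc₁ h_eval.symm

end Eliminant

theorem IsPreconnected.eq_of_firstIntegral_eq {α : Type*} [TopologicalSpace α] {s : Set α}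
    {f g : α → ℝ} {m c₁ c₂ : ℝ} (hs : IsPreconnected s) (hf : ContinuousOn f s)
    (hm : 0 < m) (hf0 : ∀ z ∈ s, 0 ≤ f z) (hg0 : ∀ z ∈ s, 0 ≤ g z)
    (h₁ : ∀ z ∈ s, firstIntegral m (f z) (g z) = c₁)
    (h₂ : ∀ z ∈ s, firstIntegral m (g z) (f z) = c₂) {x y : α} (hx : x ∈ s)
    (hy : y ∈ s) :
    f x = f y := by
  have hc₁ : 0 ≤ c₁ := h₁ x hx ▸ firstIntegral_nonneg hm.le (hf0 x hx) (hg0 x hx)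
  have hp : eliminant m c₁ c₂ ≠ 0 := eliminant_ne_zero hm.ne' (by positivity)
  refine hs.eq_of_isRoot hf hp (fun z hz => isRoot_eliminant (b := g z) ?_ ?_) hx hy
  · exact (firstIntegral_eq_iff (by linarith [hg0 z hz])).1 (h₁ z hz)
  · exact (firstIntegral_eq_iff (by linarith [hf0 z hz])).1 (h₂ z hz)

theorem no_territorial_patterns_local
    (m : ℝ) (hm : 0 < m) (u v : ℝ → ℝ)
    (hu : ContDiffOn ℝ 1 u (Set.Icc 0 1))
    (hv : ContDiffOn ℝ 1 v (Set.Icc 0 1))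
    (hu0 : ∀ x ∈ Set.Icc (0:ℝ) 1, 0 ≤ u x)
    (hv0 : ∀ x ∈ Set.Icc (0:ℝ) 1, 0 ≤ v x)
    (heq1 : ∀ x ∈ Set.Icc (0:ℝ) 1,
      (m + 2 * v x) * (m + v x) * derivWithin u (Set.Icc 0 1) x
        + 2 * u x * (2 * m + v x) * derivWithin v (Set.Icc 0 1) x = 0)
    (heq2 : ∀ x ∈ Set.Icc (0:ℝ) 1,
      2 * v x * (2 * m + u x) * derivWithin u (Set.Icc 0 1) x
        + (m + 2 * u x) * (m + u x) * derivWithin v (Set.Icc 0 1) x = 0) :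
    (∀ x ∈ Set.Icc (0:ℝ) 1, u x = u 0) ∧ (∀ x ∈ Set.Icc (0:ℝ) 1, v x = v 0) := by
  set I := Set.Icc (0 : ℝ) 1
  have h0 : (0 : ℝ) ∈ I := Set.left_mem_Icc.2 zero_le_one
  have hu' x (hx : x ∈ I) := (hu.differentiableOn one_ne_zero x hx).hasDerivWithinAt
  have hv' x (hx : x ∈ I) := (hv.differentiableOn one_ne_zero x hx).hasDerivWithinAt
  have hI₁ : ∀ x ∈ I, firstIntegral m (u x) (v x) = firstIntegral m (u 0) (v 0) :=
    fun x hx => (convex_Icc 0 1).eq_of_hasDerivWithinAt_zero (fun y hy =>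
      hasDerivWithinAt_firstIntegral (hu' y hy) (hv' y hy) (by linarith [hv0 y hy])
        (heq1 y hy)) hx h0
  have hI₂ : ∀ x ∈ I, firstIntegral m (v x) (u x) = firstIntegral m (v 0) (u 0) :=
    fun x hx => (convex_Icc 0 1).eq_of_hasDerivWithinAt_zero (fun y hy =>
      hasDerivWithinAt_firstIntegral (hv' y hy) (hu' y hy) (by linarith [hu0 y hy])
        (by linear_combination heq2 y hy)) hx h0
  exact ⟨fun x hx => isPreconnected_Icc.eq_of_firstIntegral_eq hu.continuousOn hm hu0 hv0
      hI₁ hI₂ hx h0,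
    fun x hx => isPreconnected_Icc.eq_of_firstIntegral_eq hv.continuousOn hm hv0 hu0
      hI₂ hI₁ hx h0⟩
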